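/- Let H be a real Hilbert space and B₁ : F → H a bounded operator from a Hilbert space F, Q : F → F bounded self-adjoint with Q ≥ β·I, β > 0. Then for all x ∈ H: sup over f with ⟨Qf, f⟩ ≤ 1 of ⟨B₁ f, x⟩² = ⟨B₁ Q⁻¹ B₁* x, x⟩. -/
import Mathlib


open scoped RealInnerProductSpace

theorem sup_inner_B_sq_over_ellipsoid {F H : Type*} [NormedAddCommGroup F]
    [InnerProductSpace ℝ F] [CompleteSpace F] [NormedAddCommGroup H]
    [InnerProductSpace ℝ H] [CompleteSpace H]
    (B₁ : F →L[ℝ] H) (Q Qinv : F →L[ℝ] F)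
    (hsa : ∀ x y : F, ⟪Q x, y⟫ = ⟪x, Q y⟫)
    (β : ℝ) (hβ : 0 < β) (hcoer : ∀ x : F, β * ‖x‖ ^ 2 ≤ ⟪Q x, x⟫)
    (hQQinv : Q.comp Qinv = ContinuousLinearMap.id ℝ F)
    (hQinvQ : Qinv.comp Q = ContinuousLinearMap.id ℝ F) (x : H) :
    sSup ((fun f => ⟪B₁ f, x⟫ ^ 2) '' {f : F | ⟪Q f, f⟫ ≤ 1}) =
      ⟪B₁ (Qinv (ContinuousLinearMap.adjoint B₁ x)), x⟫ := by
  classical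
  set g := ContinuousLinearMap.adjoint B₁ x with hg
  set hh := Qinv g with hhh
  have hQh : Q hh = g := by
    have := congrArg (fun T : F →L[ℝ] F => T g) hQQinv
    simpa using this
  have hQnn : ∀ f : F, 0 ≤ ⟪Q f, f⟫ := fun f =>
    le_trans (by positivity) (hcoer f)
  have hzero : ∀ f : F, ⟪Q f, f⟫ = 0 → f = 0 := by
    intro f hf
    have h1 := hcoer f
    rw [hf] at h1
    by_contra hne
    have hn : 0 < ‖f‖ := norm_pos_iff.mpr hne
    nlinarith [mul_pos hβ (pow_pos hn 2)]
  have hCS : ∀ f k : F, ⟪Q f, k⟫ ^ 2 ≤ ⟪Q f, f⟫ * ⟪Q k, k⟫ := by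
    intro f k
    by_cases hb : ⟪Q k, k⟫ = 0
    · have hk0 : k = 0 := hzero k hb
      subst hk0; simp
    · have hbpos : 0 < ⟪Q k, k⟫ := lt_of_le_of_ne (hQnn k) (Ne.symm hb)
      have hsym : ⟪Q k, f⟫ = ⟪Q f, k⟫ := by
        rw [hsa k f, real_inner_comm]
      have hexp := hQnn (⟪Q k, k⟫ • f - ⟪Q f, k⟫ • k)
      simp only [map_sub, map_smul, inner_sub_left, inner_sub_right,
        inner_smul_left, inner_smul_right, RCLike.conj_to_real,
        conj_trivial] at hexp
      rw [hsym] at hexp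
      nlinarith [hexp, hbpos, mul_pos hbpos hbpos]
  have hval : ∀ f : F, ⟪B₁ f, x⟫ = ⟪Q f, hh⟫ := by
    intro f
    have h1 : ⟪B₁ f, x⟫ = ⟪f, g⟫ :=
      (ContinuousLinearMap.adjoint_inner_right B₁ f x).symm
    rw [h1, ← hQh, ← hsa]
  have hRHS : ⟪B₁ (Qinv (ContinuousLinearMap.adjoint B₁ x)), x⟫ = ⟪Q hh, hh⟫ :=
    hval hh
  rw [hRHS]
  apply IsGreatest.csSup_eq
  constructor
  · by_cases hc0 : ⟪Q hh, hh⟫ = 0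
    · refine ⟨0, ?_, ?_⟩
      · simp
      · simp [hval, hc0]
    · have hcpos : 0 < ⟪Q hh, hh⟫ := lt_of_le_of_ne (hQnn hh) (Ne.symm hc0)
      have hs : Real.sqrt ⟪Q hh, hh⟫ ^ 2 = ⟪Q hh, hh⟫ := Real.sq_sqrt hcpos.le
      have hspos : 0 < Real.sqrt ⟪Q hh, hh⟫ := Real.sqrt_pos.mpr hcpos
      refine ⟨(Real.sqrt ⟪Q hh, hh⟫)⁻¹ • hh, ?_, ?_⟩
      · simp only [Set.mem_setOf_eq, map_smul, inner_smul_left,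
          inner_smul_right, conj_trivial]
        rw [← mul_assoc, ← mul_inv, Real.mul_self_sqrt hcpos.le,
          inv_mul_cancel₀ hc0]
      · simp only [hval, map_smul, inner_smul_left, conj_trivial]
        rw [mul_pow, inv_pow, hs, sq, ← mul_assoc, inv_mul_cancel₀ hc0,
          one_mul]
  · rintro y ⟨f, hf, rfl⟩
    simp only [hval]
    calc ⟪Q f, hh⟫ ^ 2 ≤ ⟪Q f, f⟫ * ⟪Q hh, hh⟫ := hCS f hh
      _ ≤ 1 * ⟪Q hh, hh⟫ := mul_le_mul_of_nonneg_right hf (hQnn hh)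
      _ = ⟪Q hh, hh⟫ := one_mul _
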